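/- arXiv:1709.04753 — 6 statements merged into one kernel-verified Lean document; each statement's English description precedes it below -/
import Mathlib

section
/- Let d be a natural number and let Λ be an Iwanaga–Gorenstein ring of dimension at most d. Let N be a finitely generated left Λ-module and let 0 → M → P_{d-1} → ⋯ → P_1 → P_0 → N → 0 be an exact sequence of finitely generated left Λ-modules in which P_0, …, P_{d-1} are projective (so M is a d-th syzygy of N). Then M is Gorenstein projective, i.e., Ext^i_Λ(M, Λ) = 0 for all i > 0. In particular, for every n ≥ d, every n-th syzygy of a finitely generated left Λ-module is Gorenstein projective. -/
open CategoryTheory Opposite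

/-- The `i`-th Ext group `Ext^i_Λ(M, Λ)` computed in the abelian category of left
`Λ`-modules (with `Λ` viewed as a left module over itself). -/
noncomputable def extSelf (Λ : Type) [Ring Λ] (M : ModuleCat.{0} Λ) (i : ℕ) : ModuleCat ℤ :=
  ((Ext ℤ (ModuleCat.{0} Λ) i).obj (op M)).obj (ModuleCat.of Λ Λ)

/-- The `i`-th Ext group `Ext^i_{Λᵒᵖ}(N, Λ)` computed in the abelian category of right
`Λ`-modules, i.e. left modules over the opposite ring. -/
noncomputable def extSelfOp (Λ : Type) [Ring Λ] (N : ModuleCat.{0} Λᵐᵒᵖ) (i : ℕ) : ModuleCat ℤ :=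
  ((Ext ℤ (ModuleCat.{0} Λᵐᵒᵖ) i).obj (op N)).obj (ModuleCat.of Λᵐᵒᵖ Λ)

/-- A left `Λ`-module `M` is Gorenstein projective if `Ext^i_Λ(M, Λ) = 0` for all `i > 0`. -/
def IsGorensteinProjective (Λ : Type) [Ring Λ] (M : ModuleCat.{0} Λ) : Prop :=
  ∀ i : ℕ, 0 < i → Limits.IsZero (extSelf Λ M i)

/-- A ring `Λ` is Iwanaga–Gorenstein of dimension at most `d` if it is left and right
Noetherian and `Ext^i(N, Λ)` vanishes for `i > d` for all finitely generated left modules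
`N` as well as for all finitely generated right modules `N`. -/
def IsIwanagaGorenstein (Λ : Type) [Ring Λ] (d : ℕ) : Prop :=
  IsNoetherianRing Λ ∧ IsNoetherianRing Λᵐᵒᵖ ∧
    (∀ N : ModuleCat.{0} Λ, Module.Finite Λ N → ∀ i : ℕ, d < i →
      Limits.IsZero (extSelf Λ N i)) ∧
    (∀ N : ModuleCat.{0} Λᵐᵒᵖ, Module.Finite Λᵐᵒᵖ N → ∀ i : ℕ, d < i →
      Limits.IsZero (extSelfOp Λ N i))

/-!
Dimension shifting. If `0 → K → P → C → 0` is exact with `P` projective, splicing a projective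
resolution `Q` of `K` onto it gives the projective resolution `⋯ → Q₁ → Q₀ → P` of `C`, whose
Hom-complex into `Y` is that of `Q` shifted by one; hence `Ext^{i+1}(K, Y) ≅ Ext^{i+2}(C, Y)`.
Cutting `0 → M → P_{n-1} → ⋯ → P_0 → N → 0` into such short exact sequences at the images of the
differentials gives `Ext^{i+1}(M, Λ) = 0` as soon as `Ext^{i+1+n}(N, Λ) = 0`, which holds over an
Iwanaga–Gorenstein ring of dimension `d ≤ n`.
-/

open Limits

universe v u

namespace ChainComplex

variable {C : Type u} [Category.{v} C] [Abelian C]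

lemma quasiIsoAt_zero_toSingle₀Equiv_symm_iff (K : ChainComplex C ℕ) {X : C} (f : K.X 0 ⟶ X)
    (w : K.d 1 0 ≫ f = 0) :
    QuasiIsoAt ((K.toSingle₀Equiv X).symm ⟨f, w⟩) 0 ↔ (ShortComplex.mk _ _ w).Exact ∧ Epi f := by
  rw [quasiIsoAt₀_iff, ShortComplex.quasiIso_iff_of_zeros' _ (K.shape 0 0 (by simp)) rfl rfl]
  refine ShortComplex.exact_and_epi_g_iff_of_iso
    (ShortComplex.isoMk (Iso.refl _) (Iso.refl _) (Iso.refl _) ?_ ?_)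
  -- Here and below the identities sit on objects that agree only up to unfolding,
  -- so `simp` cannot cancel them.
  · exact (Category.id_comp _).trans (Category.comp_id _).symm
  · simp only [Iso.refl_hom, HomologicalComplex.shortComplexFunctor'_map_τ₂,
      toSingle₀Equiv_symm_apply_f_zero]
    exact (Category.id_comp _).trans (Category.comp_id _).symm

variable (K : ChainComplex C ℕ) {X : C} (f : K.X 0 ⟶ X) (w : K.d 1 0 ≫ f = 0)

lemma augment_exactAt_one_iff : (K.augment f w).ExactAt 1 ↔ (ShortComplex.mk _ _ w).Exact := by
  rw [HomologicalComplex.exactAt_iff' _ 2 1 0 (by simp) (by simp)]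
  rfl

lemma augment_exactAt_succ_succ_iff (k : ℕ) :
    (K.augment f w).ExactAt (k + 2) ↔ K.ExactAt (k + 1) := by
  rw [HomologicalComplex.exactAt_iff' _ (k + 3) (k + 2) (k + 1) (by simp) (by simp),
    HomologicalComplex.exactAt_iff' _ (k + 2) (k + 1) k (by simp) (by simp)]
  refine ShortComplex.exact_iff_of_iso
    (ShortComplex.isoMk (Iso.refl _) (Iso.refl _) (Iso.refl _) ?_ ?_)
  · simp only [Iso.refl_hom, HomologicalComplex.shortComplexFunctor'_obj_f, augment_d_succ_succ]
    exact (Category.id_comp _).trans (Category.comp_id _).symm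
  · simp only [Iso.refl_hom, HomologicalComplex.shortComplexFunctor'_obj_g, augment_d_succ_succ]
    exact (Category.id_comp _).trans (Category.comp_id _).symm

noncomputable def augmentLinearYonedaObjHomologyIso {R : Type*} [Ring R] [Linear R C] (Y : C)
    (n : ℕ) :
    ((K.augment f w).linearYonedaObj R Y).homology (n + 2) ≅
      (K.linearYonedaObj R Y).homology (n + 1) :=
  HomologicalComplex.homologyIsoSc' _ (n + 1) (n + 2) (n + 3)
      (CochainComplex.prev_nat_succ _) (CochainComplex.next _ _) ≪≫
    ShortComplex.homologyMapIso (ShortComplex.isoMk (Iso.refl _) (Iso.refl _) (Iso.refl _)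
      (by
        simp only [Iso.refl_hom, HomologicalComplex.shortComplexFunctor'_obj_f,
          linearYonedaObj_d, augment_X_succ, augment_d_succ_succ]
        exact (Category.id_comp _).trans (Category.comp_id _).symm)
      (by
        simp only [Iso.refl_hom, HomologicalComplex.shortComplexFunctor'_obj_g,
          linearYonedaObj_d, augment_X_succ, augment_d_succ_succ]
        exact (Category.id_comp _).trans (Category.comp_id _).symm)) ≪≫
    (HomologicalComplex.homologyIsoSc' (K.linearYonedaObj R Y) n (n + 1) (n + 2)
      (CochainComplex.prev_nat_succ _) (CochainComplex.next _ _)).symm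

end ChainComplex

namespace CategoryTheory

variable {C : Type u} [Category.{v} C] [Abelian C]

namespace ProjectiveResolution

/-- `Q.π.f 0` with codomain `Z` itself: the degree-`0` object of the single complex on `Z` is `Z`
only after unfolding, which blocks rewriting with lemmas about `Z`. -/
def augmentation {Z : C} (Q : ProjectiveResolution Z) : Q.complex.X 0 ⟶ Z := Q.π.f 0

variable {Z : C} (Q : ProjectiveResolution Z)

@[simp]
lemma d_comp_augmentation : Q.complex.d 1 0 ≫ Q.augmentation = 0 := Q.complex_d_comp_π_f_zero

@[simp]
lemma d_comp_augmentation_assoc {W : C} (h : Z ⟶ W) :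
    Q.complex.d 1 0 ≫ Q.augmentation ≫ h = 0 := by
  rw [← Category.assoc, d_comp_augmentation, zero_comp]

lemma exact_augmentation : (ShortComplex.mk _ _ Q.d_comp_augmentation).Exact := Q.exact₀

instance : Epi Q.augmentation := inferInstanceAs (Epi (Q.π.f 0))

variable {S : ShortComplex C} (Q : ProjectiveResolution S.X₁)

lemma augmentation_comp_f_comp_g : (Q.augmentation ≫ S.f) ≫ S.g = 0 := by
  simp

lemma exact_augmentation_comp_f (hS : S.ShortExact) :
    (ShortComplex.mk _ _ Q.augmentation_comp_f_comp_g).Exact :=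
  (ShortComplex.exact_iff_of_epi_of_isIso_of_mono
    ({ τ₁ := Q.augmentation, τ₂ := 𝟙 _, τ₃ := 𝟙 _ } :
      ShortComplex.mk _ _ Q.augmentation_comp_f_comp_g ⟶ S)).2 hS.exact

lemma exact_d_augmentation_comp_f (hS : S.ShortExact) :
    (ShortComplex.mk (Q.complex.d 1 0) (Q.augmentation ≫ S.f) (by simp)).Exact :=
  have := hS.mono_f
  (ShortComplex.exact_iff_of_epi_of_isIso_of_mono
    ({ τ₁ := 𝟙 _, τ₂ := 𝟙 _, τ₃ := S.f } : ShortComplex.mk _ _ Q.d_comp_augmentation ⟶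
      ShortComplex.mk (Q.complex.d 1 0) (Q.augmentation ≫ S.f) (by simp))).1
    Q.exact_augmentation

/-- The projective resolution `⋯ → Q₁ → Q₀ → S.X₂` of `S.X₃`. -/
noncomputable def splice (hS : S.ShortExact) [Projective S.X₂] : ProjectiveResolution S.X₃ where
  complex := Q.complex.augment (Q.augmentation ≫ S.f) (by simp)
  projective
    | 0 => (inferInstance : Projective S.X₂)
    | k + 1 => (inferInstance : Projective (Q.complex.X k))
  π := (ChainComplex.toSingle₀Equiv _ _).symm ⟨S.g, Q.augmentation_comp_f_comp_g⟩
  quasiIso := ⟨fun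
    | 0 => (ChainComplex.quasiIsoAt_zero_toSingle₀Equiv_symm_iff _ _ _).2
        ⟨Q.exact_augmentation_comp_f hS, hS.epi_g⟩
    | 1 => by
      rw [quasiIsoAt_iff_exactAt' _ _ (ChainComplex.exactAt_succ_single_obj _ _),
        ChainComplex.augment_exactAt_one_iff]
      exact Q.exact_d_augmentation_comp_f hS
    | k + 2 => by
      rw [quasiIsoAt_iff_exactAt' _ _ (ChainComplex.exactAt_succ_single_obj _ _),
        ChainComplex.augment_exactAt_succ_succ_iff]
      exact Q.complex_exactAt_succ k⟩

end ProjectiveResolution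

variable {R : Type*} [Ring R] [Linear R C] [EnoughProjectives C]

noncomputable def ShortComplex.ShortExact.extSuccIso {S : ShortComplex C} (hS : S.ShortExact)
    [Projective S.X₂] (Y : C) (n : ℕ) :
    ((Ext R C (n + 1)).obj (Opposite.op S.X₁)).obj Y ≅
      ((Ext R C (n + 2)).obj (Opposite.op S.X₃)).obj Y :=
  let Q := ProjectiveResolution.of S.X₁
  Q.isoExt (n + 1) Y ≪≫
    (ChainComplex.augmentLinearYonedaObjHomologyIso (R := R) _ _ (by simp) Y n).symm ≪≫
    ((Q.splice hS).isoExt (n + 2) Y).symm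

lemma isZero_Ext_of_iso {A B : C} (e : A ≅ B) {n : ℕ} {Y : C}
    (h : IsZero (((Ext R C n).obj (op B)).obj Y)) : IsZero (((Ext R C n).obj (op A)).obj Y) :=
  h.of_iso (((Ext R C n).mapIso e.symm.op).app Y)

end CategoryTheory

namespace ModuleCat

variable {Λ : Type u} [Ring Λ] [Small.{v} Λ] {R : Type*} [Ring R] [Linear R (ModuleCat.{v} Λ)]

noncomputable def extSuccKerIso {M N : ModuleCat.{v} Λ} [Module.Projective Λ M] (g : M ⟶ N)
    (Y : ModuleCat.{v} Λ) (n : ℕ) :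
    ((Ext R (ModuleCat.{v} Λ) (n + 1)).obj (op (of Λ (LinearMap.ker g.hom)))).obj Y ≅
      ((Ext R (ModuleCat.{v} Λ) (n + 2)).obj (op (of Λ (LinearMap.range g.hom)))).obj Y :=
  have : Projective (of Λ M) := (IsProjective.iff_projective M).1 inferInstance
  ((Ext R _ (n + 1)).mapIso
      (LinearEquiv.ofEq _ _ (LinearMap.ker_rangeRestrict g.hom)).toModuleIso.op).app Y ≪≫
    (LinearMap.shortExact_shortComplexKer g.hom.surjective_rangeRestrict).extSuccIso Y n

theorem isZero_Ext_succ_range_of_exact {V : ℕ → ModuleCat.{v} Λ} {f : ∀ i, V (i + 1) ⟶ V i}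
    {n : ℕ} (hP : ∀ i, 1 ≤ i → i ≤ n → Module.Projective Λ (V i))
    (hsurj : Function.Surjective (f 0)) (hexact : ∀ i, i < n → Function.Exact (f (i + 1)) (f i))
    (Y : ModuleCat.{v} Λ) (j : ℕ) (hj : j ≤ n) (i : ℕ)
    (h : IsZero (((Ext R _ (i + 1 + j)).obj (op (V 0))).obj Y)) :
    IsZero (((Ext R _ (i + 1)).obj (op (of Λ (LinearMap.range (f j).hom)))).obj Y) := by
  induction j generalizing i with
  | zero =>
    exact isZero_Ext_of_iso (LinearEquiv.ofTop _ (LinearMap.range_eq_top.2 hsurj)).toModuleIso h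
  | succ j ih =>
    have hker : LinearMap.ker (f j).hom = LinearMap.range (f (j + 1)).hom :=
      (hexact j hj).linearMap_ker_eq
    have := hP (j + 1) (by omega) hj
    refine isZero_Ext_of_iso (LinearEquiv.ofEq _ _ hker.symm).toModuleIso
      ((ih (by omega) (i + 1) ?_).of_iso (extSuccKerIso (f j) Y i))
    rwa [show i + 1 + 1 + j = i + 1 + (j + 1) by omega]

end ModuleCat

/-- Over an Iwanaga–Gorenstein ring of dimension at most `d`, for any `n ≥ d`, any `n`-th
syzygy of a finitely generated left module is Gorenstein projective.  Here the exact
sequence `0 → M → P_{n-1} → ⋯ → P_0 → N → 0` is encoded by `V 0 = N`, `V (n+1) = M`, and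
projective finitely generated middle terms `V 1, …, V n`, with differentials
`f i : V (i+1) ⟶ V i`. -/
theorem syzygy_isGorensteinProjective
    (Λ : Type) [Ring Λ] (d : ℕ) (hΛ : IsIwanagaGorenstein Λ d)
    (n : ℕ) (hn : d ≤ n)
    (V : ℕ → ModuleCat.{0} Λ) (f : ∀ i, V (i + 1) ⟶ V i)
    (hN : Module.Finite Λ (V 0))
    (hP : ∀ i, 1 ≤ i → i ≤ n → Module.Projective Λ (V i) ∧ Module.Finite Λ (V i))
    (hsurj : Function.Surjective (f 0))
    (hexact : ∀ i, i < n → Function.Exact (f (i + 1)) (f i))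
    (hinj : Function.Injective (f n)) :
    IsGorensteinProjective Λ (V (n + 1)) := by
  obtain ⟨-, -, hExt, -⟩ := hΛ
  rintro (_ | i) hi
  · exact absurd hi (lt_irrefl 0)
  have hM : V (n + 1) ≅ ModuleCat.of Λ (LinearMap.range (f n).hom) :=
    (LinearEquiv.ofInjective (f n).hom hinj).toModuleIso
  exact isZero_Ext_of_iso hM (ModuleCat.isZero_Ext_succ_range_of_exact
    (fun i h₁ h₂ => (hP i h₁ h₂).1) hsurj hexact _ n le_rfl i (hExt (V 0) hN _ (by omega)))
end

section
/- Let d be a natural number, let Λ be an Iwanaga–Gorenstein ring of dimension at most d, and let M be a finitely generated Gorenstein projective left Λ-module. Equip the dual M* = Hom_Λ(M, Λ) with its natural structure of a right Λ-module (equivalently, of a left module over the opposite ring Λᵒᵖ), given by (f·λ)(m) = f(m)·λ. Then: (i) M* is a finitely generated Gorenstein projective right Λ-module, i.e., Ext^i_{Λᵒᵖ}(M*, Λ) = 0 for all i > 0, where Λ is viewed as a right module over itself; and (ii) the evaluation homomorphism M → Hom_{Λᵒᵖ}(M*, Λ), sending m to the map f ↦ f(m), is bijective. -/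
open CategoryTheory Opposite

/-- A right `Λ`-module (i.e. left `Λᵐᵒᵖ`-module) `N` is Gorenstein projective if
`Ext^i_{Λᵒᵖ}(N, Λ) = 0` for all `i > 0`. -/
def IsGorensteinProjectiveOp (Λ : Type) [Ring Λ] (N : ModuleCat.{0} Λᵐᵒᵖ) : Prop :=
  ∀ i : ℕ, 0 < i → Limits.IsZero (extSelfOp Λ N i)

/-!
Let `0 → K → F → M → 0` be a presentation of `M` with `F` finite free. As `Ext¹(M, Λ) = 0`,
dualising gives a short exact sequence `0 → M* → F* → K* → 0` of right modules with `F*` finite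
free, and `K` is again finitely generated and Gorenstein projective. Dimension shifting along
these sequences identifies `Ext^{i+1}(M*, Λ)` with `Ext^{i+1+k}((Ωᵏ M)*, Λ)`, which vanishes for
`k = d` because `Λ` is Iwanaga–Gorenstein. Now `Ext¹(K*, Λ) = 0`, so every functional on `M*`
extends to `F*`, where it is evaluation at a vector of `F`: this makes `M → M**` surjective.
Injectivity follows by applying surjectivity to `K`.
-/

open Limits

universe u v

section Resolution

variable {R : Type u} [Ring R]

/-- A projective resolution with exactness stated elementwise, which makes splicing with a short
exact sequence (`splice`) elementary. -/
structure ConcreteResolution (N : ModuleCat.{u} R) where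
  X : ℕ → ModuleCat.{u} R
  projective : ∀ n, Projective (X n)
  d : ∀ n, X (n + 1) ⟶ X n
  π : X 0 ⟶ N
  surjective_π : Function.Surjective π
  exact_zero : Function.Exact (d 0) π
  exact_succ : ∀ n, Function.Exact (d (n + 1)) (d n)

namespace ConcreteResolution

variable {N : ModuleCat.{u} R} (C : ConcreteResolution N)

lemma d_comp_d (n : ℕ) : C.d (n + 1) ≫ C.d n = 0 := by
  ext x; exact (C.exact_succ n).apply_apply_eq_zero x

lemma d_comp_π : C.d 0 ≫ C.π = 0 := by
  ext x; exact C.exact_zero.apply_apply_eq_zero x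

noncomputable def complex : ChainComplex (ModuleCat.{u} R) ℕ :=
  ChainComplex.of C.X C.d C.d_comp_d

lemma complex_d (n : ℕ) : C.complex.d (n + 1) n = C.d n := ChainComplex.of_d _ _ n

noncomputable def toProjectiveResolution : ProjectiveResolution N where
  complex := C.complex
  projective := C.projective
  π := (ChainComplex.toSingle₀Equiv _ _).symm ⟨C.π, by rw [C.complex_d]; exact C.d_comp_π⟩
  quasiIso := ⟨fun n => by
    cases n with
    | zero =>
      rw [ChainComplex.quasiIsoAt₀_iff, ShortComplex.quasiIso_iff_of_zeros' _ rfl rfl rfl]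
      refine ⟨?_, ?_⟩
      · rw [ShortComplex.ShortExact.moduleCat_exact_iff_function_exact]
        change Function.Exact (C.complex.d 1 0) C.π
        rw [C.complex_d]
        exact C.exact_zero
      · exact (ModuleCat.epi_iff_surjective _).2 C.surjective_π
    | succ n =>
      rw [quasiIsoAt_iff_exactAt' _ _ (ChainComplex.exactAt_succ_single_obj _ _),
        HomologicalComplex.exactAt_iff' _ (n + 2) (n + 1) n (by simp) (by simp),
        ShortComplex.ShortExact.moduleCat_exact_iff_function_exact]
      change Function.Exact (C.complex.d (n + 2) (n + 1)) (C.complex.d (n + 1) n)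
      rw [C.complex_d, C.complex_d]
      exact C.exact_succ n⟩

lemma isZero_ext_succ_iff (Y : ModuleCat.{u} R) (i : ℕ) :
    IsZero (((Ext ℤ (ModuleCat.{u} R) (i + 1)).obj (op N)).obj Y) ↔
      ∀ g : C.X (i + 1) ⟶ Y, C.d (i + 1) ≫ g = 0 → ∃ h : C.X i ⟶ Y, C.d i ≫ h = g := by
  rw [(C.toProjectiveResolution.isoExt (i + 1) Y).isZero_iff,
    ← HomologicalComplex.exactAt_iff_isZero_homology,
    HomologicalComplex.exactAt_iff' _ i (i + 1) (i + 2) (by simp) (by simp),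
    ShortComplex.moduleCat_exact_iff]
  change (∀ g : C.complex.X (i + 1) ⟶ Y, C.complex.d (i + 2) (i + 1) ≫ g = 0 →
    ∃ h : C.complex.X i ⟶ Y, C.complex.d (i + 1) i ≫ h = g) ↔ _
  simp only [C.complex_d]
  rfl

noncomputable def ofProjectiveResolution (P : ProjectiveResolution N) : ConcreteResolution N where
  X := P.complex.X
  projective := P.projective
  d n := P.complex.d (n + 1) n
  π := P.π.f 0
  surjective_π := (ModuleCat.epi_iff_surjective (P.π.f 0)).1 inferInstance
  exact_zero := (ShortComplex.ShortExact.moduleCat_exact_iff_function_exact _).1 P.exact₀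
  exact_succ n := (ShortComplex.ShortExact.moduleCat_exact_iff_function_exact _).1 (P.exact_succ n)

variable {S : ShortComplex (ModuleCat.{u} R)}

noncomputable def splice (C : ConcreteResolution S.X₁) (hS : S.ShortExact) [Projective S.X₂] :
    ConcreteResolution S.X₃ where
  X
    | 0 => S.X₂
    | n + 1 => C.X n
  projective
    | 0 => inferInstance
    | n + 1 => C.projective n
  d
    | 0 => C.π ≫ S.f
    | n + 1 => C.d n
  π := S.g
  surjective_π := hS.moduleCat_surjective_g
  exact_zero := (Function.Surjective.comp_exact_iff_exact (f := S.f.hom) (g := S.g.hom)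
    C.surjective_π).2 ((ShortComplex.ShortExact.moduleCat_exact_iff_function_exact S).1 hS.exact)
  exact_succ
    | 0 => (Function.Injective.comp_exact_iff_exact (f := (C.d 0).hom) (g := C.π.hom)
      hS.moduleCat_injective_f).2 C.exact_zero
    | n + 1 => C.exact_succ n

end ConcreteResolution

section DimensionShift

variable {S : ShortComplex (ModuleCat.{u} R)} (hS : S.ShortExact) [Projective S.X₂]
  (Y : ModuleCat.{u} R)
include hS

lemma isZero_ext_add_two_iff (i : ℕ) :
    IsZero (((Ext ℤ (ModuleCat.{u} R) (i + 2)).obj (op S.X₃)).obj Y) ↔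
      IsZero (((Ext ℤ (ModuleCat.{u} R) (i + 1)).obj (op S.X₁)).obj Y) :=
  let C := ConcreteResolution.ofProjectiveResolution (projectiveResolution S.X₁)
  ((C.splice hS).isZero_ext_succ_iff Y (i + 1)).trans (C.isZero_ext_succ_iff Y i).symm

lemma exists_comp_eq_of_isZero_ext_one
    (h : IsZero (((Ext ℤ (ModuleCat.{u} R) 1).obj (op S.X₃)).obj Y)) (f : S.X₁ ⟶ Y) :
    ∃ g : S.X₂ ⟶ Y, S.f ≫ g = f := by
  let C := ConcreteResolution.ofProjectiveResolution (projectiveResolution S.X₁)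
  have : Epi C.π := (ModuleCat.epi_iff_surjective _).2 C.surjective_π
  obtain ⟨g, hg⟩ := ((C.splice hS).isZero_ext_succ_iff Y 0).1 h (C.π ≫ f) (by
    change C.d 0 ≫ C.π ≫ f = 0
    rw [← Category.assoc, C.d_comp_π, zero_comp])
  exact ⟨g, (cancel_epi C.π).1 ((Category.assoc _ _ _).symm.trans hg)⟩

end DimensionShift

end Resolution

namespace LinearMap

variable {R S : Type*} [Ring R] [Semiring S] {M₁ M₂ M₃ : Type*} (N : Type*)
  [AddCommGroup M₁] [AddCommGroup M₂] [AddCommGroup M₃] [AddCommGroup N]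
  [Module R M₁] [Module R M₂] [Module R M₃] [Module R N] [Module S N] [SMulCommClass R S N]

/-- `LinearMap.exact_lcomp_of_exact_of_surjective` for noncommutative `R`. -/
lemma exact_lcomp_of_exact_of_surjective' {f : M₁ →ₗ[R] M₂} {g : M₂ →ₗ[R] M₃}
    (hfg : Function.Exact f g) (hg : Function.Surjective g) :
    Function.Exact (lcomp S N g) (lcomp S N f) := by
  intro h
  simp only [lcomp_apply', Set.mem_range]
  refine ⟨fun hh ↦ ?_, fun ⟨y, hy⟩ ↦ ?_⟩
  · use ((range f).liftQ h (range_le_ker_iff.mpr hh)).comp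
      (hfg.linearEquivOfSurjective hg).symm.toLinearMap
    ext x
    simp
  · rw [← hy, comp_assoc, hfg.linearMap_comp_eq_zero, comp_zero y]

end LinearMap

section DualPi

variable (R : Type u) [Ring R] (ι : Type v) [Fintype ι] [DecidableEq ι]

noncomputable def dualPiBasis : Module.Basis ι Rᵐᵒᵖ ((ι → R) →ₗ[R] R) :=
  (Pi.basisFun Rᵐᵒᵖ ι).map ((LinearMap.lsum R (fun _ => R) Rᵐᵒᵖ).symm ≪≫ₗ
    LinearEquiv.piCongrRight (fun _ => LinearMap.ringLmapEquivSelf R Rᵐᵒᵖ R ≪≫ₗ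
      MulOpposite.opLinearEquiv Rᵐᵒᵖ)).symm

@[simp] lemma dualPiBasis_apply (i : ι) : dualPiBasis R ι i = LinearMap.proj i := by
  ext j
  by_cases h : i = j <;> simp [dualPiBasis, Pi.single_apply, h, eq_comm]

lemma bijective_applyₗ'_pi :
    Function.Bijective (LinearMap.applyₗ' (R := R) (M := ι → R) (M₂ := R) Rᵐᵒᵖ) := by
  refine ⟨fun v w h => funext fun i => ?_, fun ξ => ⟨fun i => ξ (LinearMap.proj i), ?_⟩⟩
  · exact LinearMap.congr_fun h (LinearMap.proj i)
  · exact (dualPiBasis R ι).ext fun i => by simp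

instance : Module.Free Rᵐᵒᵖ ((ι → R) →ₗ[R] R) := .of_basis (dualPiBasis R ι)

instance : Module.Finite Rᵐᵒᵖ ((ι → R) →ₗ[R] R) := .of_basis (dualPiBasis R ι)

end DualPi

lemma Module.Finite.dual_of_isNoetherianRing {R M : Type*} [Ring R] [IsNoetherianRing Rᵐᵒᵖ]
    [AddCommGroup M] [Module R M] [Module.Finite R M] : Module.Finite Rᵐᵒᵖ (M →ₗ[R] R) := by
  obtain ⟨n, π, hπ⟩ := Module.Finite.exists_fin' R M
  exact .of_injective (LinearMap.lcomp Rᵐᵒᵖ R π) (LinearMap.lcomp_injective_of_surjective π hπ)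

section DualShortComplex

variable {R : Type u} [Ring R] (S : ShortComplex (ModuleCat.{u} R))

/-- Reducible, so that instances on duals of concrete modules apply to its objects. -/
noncomputable abbrev dualShortComplex : ShortComplex (ModuleCat.{u} Rᵐᵒᵖ) :=
  ModuleCat.shortComplexOfCompEqZero (LinearMap.lcomp Rᵐᵒᵖ R S.g.hom)
    (LinearMap.lcomp Rᵐᵒᵖ R S.f.hom) (by ext; simp)

variable {S}

lemma shortExact_dualShortComplex (hS : S.ShortExact) [Projective S.X₂]
    (h : IsZero (((Ext ℤ (ModuleCat.{u} R) 1).obj (op S.X₃)).obj (ModuleCat.of R R))) :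
    (dualShortComplex S).ShortExact := by
  refine ModuleCat.shortComplex_shortExact _ ?_
    (LinearMap.lcomp_injective_of_surjective _ hS.moduleCat_surjective_g) fun f => ?_
  · exact LinearMap.exact_lcomp_of_exact_of_surjective' R
      ((ShortComplex.ShortExact.moduleCat_exact_iff_function_exact S).1 hS.exact)
      hS.moduleCat_surjective_g
  · obtain ⟨g, hg⟩ := exists_comp_eq_of_isZero_ext_one hS _ h (ModuleCat.ofHom f)
    exact ⟨g.hom, congrArg ModuleCat.Hom.hom hg⟩

end DualShortComplex

section Gorenstein

variable {Λ : Type} [Ring Λ]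

lemma IsGorensteinProjective.of_shortExact {S : ShortComplex (ModuleCat.{0} Λ)}
    (hS : S.ShortExact) [Projective S.X₂] (h : IsGorensteinProjective Λ S.X₃) :
    IsGorensteinProjective Λ S.X₁
  | 0, hi => absurd hi (lt_irrefl 0)
  | i + 1, _ => (isZero_ext_add_two_iff hS _ i).1 (h (i + 2) (by omega))

variable {M : ModuleCat.{0} Λ} {n : ℕ} {π : (Fin n → Λ) →ₗ[Λ] M}

lemma IsGorensteinProjective.ker (hGP : IsGorensteinProjective Λ M) (hπ : Function.Surjective π) :
    IsGorensteinProjective Λ (ModuleCat.of Λ (LinearMap.ker π)) :=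
  hGP.of_shortExact (LinearMap.shortExact_shortComplexKer hπ)

lemma IsGorensteinProjective.shortExact_dualShortComplex (hGP : IsGorensteinProjective Λ M)
    (hπ : Function.Surjective π) : (dualShortComplex π.shortComplexKer).ShortExact :=
  _root_.shortExact_dualShortComplex (LinearMap.shortExact_shortComplexKer hπ) (hGP 1 one_pos)

lemma IsGorensteinProjective.isZero_extSelfOp_dual_iff (hGP : IsGorensteinProjective Λ M)
    (hπ : Function.Surjective π) (i : ℕ) :
    IsZero (extSelfOp Λ (ModuleCat.of Λᵐᵒᵖ (LinearMap.ker π →ₗ[Λ] Λ)) (i + 2)) ↔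
      IsZero (extSelfOp Λ (ModuleCat.of Λᵐᵒᵖ (M →ₗ[Λ] Λ)) (i + 1)) :=
  isZero_ext_add_two_iff (hGP.shortExact_dualShortComplex hπ) _ i

variable {d : ℕ} (hΛ : IsIwanagaGorenstein Λ d)
include hΛ

lemma IsIwanagaGorenstein.isZero_extSelfOp_dual {k : ℕ} (M : ModuleCat.{0} Λ) [Module.Finite Λ M]
    (hGP : IsGorensteinProjective Λ M) {i : ℕ} (hi : d < i + 1 + k) :
    IsZero (extSelfOp Λ (ModuleCat.of Λᵐᵒᵖ (M →ₗ[Λ] Λ)) (i + 1)) := by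
  have := hΛ.1
  have := hΛ.2.1
  induction k generalizing M i with
  | zero => exact hΛ.2.2.2 _ Module.Finite.dual_of_isNoetherianRing _ hi
  | succ k ih =>
    obtain ⟨n, π, hπ⟩ := Module.Finite.exists_fin' Λ M
    exact (hGP.isZero_extSelfOp_dual_iff hπ i).1
      (ih (ModuleCat.of Λ (LinearMap.ker π)) (hGP.ker hπ) (by omega))

lemma IsIwanagaGorenstein.isGorensteinProjectiveOp_dual (M : ModuleCat.{0} Λ)
    [Module.Finite Λ M] (hGP : IsGorensteinProjective Λ M) :
    IsGorensteinProjectiveOp Λ (ModuleCat.of Λᵐᵒᵖ (M →ₗ[Λ] Λ))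
  | 0, hi => absurd hi (lt_irrefl 0)
  | i + 1, _ => hΛ.isZero_extSelfOp_dual (k := d) M hGP (by omega)

lemma IsIwanagaGorenstein.surjective_applyₗ' (M : ModuleCat.{0} Λ) [Module.Finite Λ M]
    (hGP : IsGorensteinProjective Λ M) :
    Function.Surjective (LinearMap.applyₗ' (R := Λ) (M := M) (M₂ := Λ) Λᵐᵒᵖ) := by
  have := hΛ.1
  obtain ⟨n, π, hπ⟩ := Module.Finite.exists_fin' Λ M
  intro ξ
  obtain ⟨η, hη⟩ := exists_comp_eq_of_isZero_ext_one (hGP.shortExact_dualShortComplex hπ) _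
    (hΛ.isGorensteinProjectiveOp_dual _ (hGP.ker hπ) 1 one_pos) (ModuleCat.ofHom ξ)
  obtain ⟨v, hv⟩ := (bijective_applyₗ'_pi Λ (Fin n)).2 η.hom
  refine ⟨π v, LinearMap.ext fun f => ?_⟩
  simpa [← hv] using LinearMap.congr_fun (congrArg ModuleCat.Hom.hom hη) f

lemma IsIwanagaGorenstein.injective_applyₗ' (M : ModuleCat.{0} Λ) [Module.Finite Λ M]
    (hGP : IsGorensteinProjective Λ M) :
    Function.Injective (LinearMap.applyₗ' (R := Λ) (M := M) (M₂ := Λ) Λᵐᵒᵖ) := by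
  have := hΛ.1
  obtain ⟨n, π, hπ⟩ := Module.Finite.exists_fin' Λ M
  have hS := hGP.shortExact_dualShortComplex hπ
  rw [injective_iff_map_eq_zero]
  intro m hm
  obtain ⟨x, rfl⟩ := hπ m
  -- evaluation at `x` kills `M*`, so it factors through the restriction `F* → K*`
  obtain ⟨ζ, hζ⟩ := (LinearMap.exact_lcomp_of_exact_of_surjective' (S := ℤ) Λ
    ((ShortComplex.ShortExact.moduleCat_exact_iff_function_exact _).1 hS.exact)
    hS.moduleCat_surjective_g (LinearMap.applyₗ' Λᵐᵒᵖ x)).1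
    (LinearMap.ext fun f => LinearMap.congr_fun hm f)
  obtain ⟨ω, rfl⟩ := hΛ.surjective_applyₗ' (ModuleCat.of Λ (LinearMap.ker π)) (hGP.ker hπ) ζ
  have : x = ω := (bijective_applyₗ'_pi Λ (Fin n)).1 (LinearMap.ext fun f =>
    (LinearMap.congr_fun hζ f).symm)
  exact this ▸ ω.2

end Gorenstein

/-- Over an Iwanaga–Gorenstein ring, the dual `M* = Hom_Λ(M, Λ)` of a finitely generated
Gorenstein projective left module `M` is a finitely generated Gorenstein projective right
module, and the evaluation map `M → Hom_{Λᵒᵖ}(M*, Λ)` is bijective. -/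
theorem dual_gorensteinProjective
    (Λ : Type) [Ring Λ] (d : ℕ) (hΛ : IsIwanagaGorenstein Λ d)
    (M : ModuleCat.{0} Λ) (hfg : Module.Finite Λ M) (hGP : IsGorensteinProjective Λ M) :
    Module.Finite Λᵐᵒᵖ (M →ₗ[Λ] Λ) ∧
    IsGorensteinProjectiveOp Λ (ModuleCat.of Λᵐᵒᵖ (M →ₗ[Λ] Λ)) ∧
    Function.Bijective (fun m : M =>
      ({ toFun := fun f : M →ₗ[Λ] Λ => f m
         map_add' := fun _ _ => rfl
         map_smul' := fun _ _ => rfl } : (M →ₗ[Λ] Λ) →ₗ[Λᵐᵒᵖ] Λ)) :=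
  have := hΛ.2.1
  ⟨Module.Finite.dual_of_isNoetherianRing, hΛ.isGorensteinProjectiveOp_dual M hGP,
    hΛ.injective_applyₗ' M hGP, hΛ.surjective_applyₗ' M hGP⟩
end

section
/- Let (S, n) be a commutative Noetherian local ring which is complete with respect to the n-adic topology, let R be an S-algebra that is finitely generated as an S-module, and let M be a finitely generated R-module having no nonzero projective direct summand (every direct summand of M that is a projective R-module is the zero module). If f : M → M is an R-linear endomorphism that factors through a projective R-module (i.e., there exist a projective R-module P and R-linear maps g : M → P and h : P → M with f = h ∘ g), then f lies in the Jacobson radical of the endomorphism ring End_R(M); concretely, for every R-linear endomorphism g of M, the endomorphism id_M − g ∘ f is an automorphism of M. -/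
/-!
The subalgebra of `End_R(M)` generated by `x = g ∘ f` is commutative and finite over the
complete local ring `S`, hence Henselian along `n`. In its Artinian reduction modulo `n`, the
image of `x` is either nilpotent, which makes `1 - x` a unit, or (Fitting) divides a nonzero
idempotent. Lifting that idempotent gives a nonzero idempotent `e = x ∘ c` of `End_R(M)`; it
factors through the projective module, so its image is a nonzero projective direct summand of `M`.
-/

open IsLocalRing Polynomial

theorem IsPrecomplete.of_finite {R M : Type*} [CommRing R] [AddCommGroup M] [Module R M]
    (I : Ideal R) [IsPrecomplete I R] [Module.Finite R M] : IsPrecomplete I M := by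
  rw [← AdicCompletion.of_surjective_iff]
  intro c
  obtain ⟨t, rfl⟩ := AdicCompletion.ofTensorProduct_surjective_of_finite I M c
  induction t using TensorProduct.induction_on with
  | zero => exact ⟨0, by simp⟩
  | tmul r x =>
    obtain ⟨s, rfl⟩ := AdicCompletion.of_surjective I R r
    exact ⟨s • x, by rw [map_smul, AdicCompletion.ofTensorProduct_tmul,
      ← algebraMap_smul (AdicCompletion I R) s]; rfl⟩
  | add t₁ t₂ h₁ h₂ =>
    obtain ⟨x₁, hx₁⟩ := h₁
    obtain ⟨x₂, hx₂⟩ := h₂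
    exact ⟨x₁ + x₂, by rw [map_add, hx₁, hx₂, map_add]⟩

theorem Module.Finite.moduleEnd (S R M : Type*) [CommRing S] [IsNoetherianRing S] [Ring R]
    [Algebra S R] [AddCommGroup M] [Module R M] [Module S M] [IsScalarTower S R M]
    [Module.Finite S M] : Module.Finite S (Module.End R M) :=
  .of_injective (LinearMap.restrictScalarsₗ S R M M S) (LinearMap.restrictScalars_injective S)

theorem Module.Projective.range_of_isIdempotentElem {R M P : Type*} [Ring R] [AddCommGroup M]
    [Module R M] [AddCommGroup P] [Module R P] [Module.Projective R P] {e : Module.End R M}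
    (he : IsIdempotentElem e) (g : M →ₗ[R] P) (h : P →ₗ[R] M) (heq : e = h ∘ₗ g) :
    Module.Projective R (LinearMap.range e) := by
  refine .of_split (g ∘ₗ (LinearMap.range e).subtype) (e.rangeRestrict ∘ₗ h) ?_
  ext ⟨_, y, rfl⟩
  have : e (h (g (e y))) = e y := by
    rw [← LinearMap.comp_apply h g, ← heq, ← Module.End.mul_apply, he.eq,
      ← Module.End.mul_apply, he.eq]
  simpa using this

theorem IsArtinianRing.isNilpotent_or_exists_isIdempotentElem_dvd {B : Type*} [CommRing B]
    [IsArtinianRing B] (b : B) :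
    IsNilpotent b ∨ ∃ ε : B, IsIdempotentElem ε ∧ ε ≠ 0 ∧ b ∣ ε := by
  obtain ⟨n, y, hy⟩ := IsArtinian.exists_pow_succ_smul_dvd b (1 : B)
  rw [smul_eq_mul, smul_eq_mul, mul_one, pow_succ] at hy
  by_cases hbn : b ^ n = 0
  · exact .inl ⟨n, hbn⟩
  have hpow : ∀ k, b ^ n = b ^ (n + k) * y ^ k := by
    intro k
    induction k with
    | zero => simp
    | succ k ih => rw [ih]; linear_combination (-(b ^ k * y ^ k)) * hy
  have hfix : b ^ n * y ^ n * b ^ n = b ^ n := by linear_combination (hpow n).symm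
  refine .inr ⟨b ^ n * y ^ n, ?_, fun h => hbn (by rw [← hfix, h, zero_mul]), ?_⟩
  · calc b ^ n * y ^ n * (b ^ n * y ^ n) = b ^ n * y ^ n * b ^ n * y ^ n := by ring
      _ = b ^ n * y ^ n := by rw [hfix]
  · exact ⟨b ^ n * y ^ (n + 1), by linear_combination (-y ^ n) * hy⟩

theorem HenselianRing.exists_isIdempotentElem_sub_mem {A : Type*} [CommRing A] {I : Ideal A}
    [HenselianRing A I] {a : A} (ha : a * a - a ∈ I) :
    ∃ e : A, IsIdempotentElem e ∧ e - a ∈ I := by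
  have hmonic : (X ^ 2 - X : A[X]).Monic := by monicity!
  have hunit : IsUnit (Ideal.Quotient.mk I ((X ^ 2 - X : A[X]).derivative.eval a)) := by
    have hd : (X ^ 2 - X : A[X]).derivative.eval a = 2 * a - 1 := by simp; ring
    rw [hd]
    refine .of_mul_eq_one (Ideal.Quotient.mk I (2 * a - 1)) ?_
    rw [← map_mul, ← map_one (Ideal.Quotient.mk I), Ideal.Quotient.eq]
    convert I.mul_mem_left 4 ha using 1
    ring
  obtain ⟨e, he, hea⟩ := HenselianRing.is_henselian _ hmonic a (by simpa [sq] using ha) hunit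
  refine ⟨e, ?_, hea⟩
  simpa [IsIdempotentElem, sq, sub_eq_zero] using he

theorem Ideal.dvd_of_mk_dvd_of_isIdempotentElem {A : Type*} [CommRing A] {I : Ideal A}
    (hI : I ≤ Ideal.jacobson ⊥) {a e : A} (he : IsIdempotentElem e)
    (h : Ideal.Quotient.mk I a ∣ Ideal.Quotient.mk I e) : a ∣ e := by
  obtain ⟨c', hc⟩ := h
  obtain ⟨c, rfl⟩ := Ideal.Quotient.mk_surjective c'
  have ht : e - a * c ∈ I := Ideal.Quotient.eq.1 (by rw [hc, map_mul])
  have hu : IsUnit (1 - (e - a * c)) := by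
    simpa [sub_eq_neg_add] using Ideal.mem_jacobson_bot.1 (hI ht) (-1)
  rw [← hu.dvd_mul_right]
  exact ⟨e * c, by linear_combination -he.eq⟩

section FiniteOverCompleteLocal

variable {S : Type*} [CommRing S] [IsLocalRing S]

theorem isArtinianRing_quotient_map_maximalIdeal (A : Type*) [CommRing A] [Algebra S A]
    [Module.Finite S A] : IsArtinianRing (A ⧸ (maximalIdeal S).map (algebraMap S A)) :=
  let _ : Field (S ⧸ maximalIdeal S) := Ideal.Quotient.field _
  have : Module.Finite (S ⧸ maximalIdeal S) (A ⧸ (maximalIdeal S).map (algebraMap S A)) :=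
    .of_restrictScalars_finite S _ _
  .of_finite (S ⧸ maximalIdeal S) _

variable [IsNoetherianRing S] [IsAdicComplete (maximalIdeal S) S]

theorem henselianRing_map_maximalIdeal
    (A : Type*) [CommRing A] [Algebra S A] [Module.Finite S A] :
    HenselianRing A ((maximalIdeal S).map (algebraMap S A)) :=
  have : IsAdicComplete (maximalIdeal S) A := { toIsPrecomplete := .of_finite _ }
  have := (IsAdicComplete.map_algebraMap_iff (S := A) _ A).2 this
  inferInstance

theorem isUnit_one_sub_or_exists_isIdempotentElem_dvd {A : Type*} [CommRing A] [Algebra S A]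
    [Module.Finite S A] (a : A) :
    IsUnit (1 - a) ∨ ∃ e : A, IsIdempotentElem e ∧ e ≠ 0 ∧ a ∣ e := by
  set I := (maximalIdeal S).map (algebraMap S A)
  have := henselianRing_map_maximalIdeal (S := S) A
  have := isArtinianRing_quotient_map_maximalIdeal (S := S) A
  rcases IsArtinianRing.isNilpotent_or_exists_isIdempotentElem_dvd (Ideal.Quotient.mk I a) with
    hnil | ⟨ε, hε, hε0, hdvd⟩
  · have := isLocalHom_of_le_jacobson_bot I HenselianRing.jac
    exact .inl (isUnit_of_map_unit (Ideal.Quotient.mk I) _ (by simpa using hnil.isUnit_one_sub))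
  · obtain ⟨e₀, rfl⟩ := Ideal.Quotient.mk_surjective ε
    obtain ⟨e, he, hee₀⟩ := HenselianRing.exists_isIdempotentElem_sub_mem (I := I) (a := e₀)
      (Ideal.Quotient.eq.1 (by rw [map_mul, hε.eq]))
    have hmk : Ideal.Quotient.mk I e = Ideal.Quotient.mk I e₀ := Ideal.Quotient.eq.2 hee₀
    refine .inr ⟨e, he, fun h => hε0 (by rw [← hmk, h, map_zero]), ?_⟩
    exact Ideal.dvd_of_mk_dvd_of_isIdempotentElem HenselianRing.jac he (hmk ▸ hdvd)

theorem isUnit_one_sub_or_exists_isIdempotentElem_eq_mul {E : Type*} [Ring E] [Algebra S E]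
    [Module.Finite S E] (x : E) :
    IsUnit (1 - x) ∨ ∃ e c : E, IsIdempotentElem e ∧ e ≠ 0 ∧ e = x * c := by
  let A := Algebra.adjoin S {x}
  have : IsNoetherian S E := isNoetherian_of_isNoetherianRing_of_finite S E
  have : Module.Finite S A := .of_injective A.val.toLinearMap Subtype.val_injective
  rcases isUnit_one_sub_or_exists_isIdempotentElem_dvd (S := S)
    (⟨x, Algebra.self_mem_adjoin_singleton S x⟩ : A) with hu | ⟨e, he, hne, c, rfl⟩
  · exact .inl (by simpa using hu.map A.val)
  · exact .inr ⟨_, c, he.map A.val, fun h => hne (Subtype.val_injective h), rfl⟩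

end FiniteOverCompleteLocal

/-- Let `(S, n)` be a complete commutative Noetherian local ring and let `R` be an
`S`-algebra which is finitely generated as an `S`-module.  Let `M` be a finitely
generated `R`-module with no nonzero projective direct summand.  If `f : M → M` factors
through a projective `R`-module, then `f` lies in the Jacobson radical of `End_R(M)`:
for every `R`-linear endomorphism `g` of `M`, the endomorphism `id_M - g ∘ f` is an
automorphism of `M`. -/
theorem factorsThroughProjective_mem_jacobsonRadical
    (S : Type) [CommRing S] [IsNoetherianRing S] [IsLocalRing S]
    [IsAdicComplete (IsLocalRing.maximalIdeal S) S]
    (R : Type) [Ring R] [Algebra S R] [Module.Finite S R]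
    (M : Type) [AddCommGroup M] [Module R M] [Module.Finite R M]
    (hM : ∀ N : Submodule R M, (∃ N' : Submodule R M, IsCompl N N') →
      Module.Projective R N → N = ⊥)
    (f : M →ₗ[R] M)
    (hf : ∃ (P : Type) (_ : AddCommGroup P) (_ : Module R P),
      Module.Projective R P ∧ ∃ (g : M →ₗ[R] P) (h : P →ₗ[R] M), f = h ∘ₗ g) :
    ∀ g : Module.End R M, IsUnit (1 - g * f) := by
  let _ : Module S M := Module.compHom M (algebraMap S R)
  have : IsScalarTower S R M := .of_compHom S R M
  have : Module.Finite S M := .trans R M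
  have := Module.Finite.moduleEnd S R M
  obtain ⟨P, _, _, _, g₀, h₀, rfl⟩ := hf
  intro g
  rcases isUnit_one_sub_or_exists_isIdempotentElem_eq_mul (S := S) (g * h₀ ∘ₗ g₀) with
    hu | ⟨e, c, he, hne, rfl⟩
  · exact hu
  · have hproj :=
      Module.Projective.range_of_isIdempotentElem he (g₀ ∘ₗ c) (g ∘ₗ h₀) rfl
    have hsummand := hM _ ⟨_, LinearMap.IsIdempotentElem.isCompl he⟩ hproj
    exact absurd (LinearMap.range_eq_bot.1 hsummand) hne
end

section
/- Let T and T′ be triangulated categories and let F : T → T′ be a triangulated functor. Let K be the full triangulated subcategory of T consisting of the objects X with F(X) isomorphic to zero, let q : T → T/K denote the Verdier quotient functor, and let G : T/K → T′ be a functor with a natural isomorphism G ∘ q ≅ F. If G is full, then G is faithful. In particular, if F is full and essentially surjective, then G is an equivalence of categories (that is, F is a triangulated quotient functor). -/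
open CategoryTheory Limits Pretriangulated

/-! Suppose `G` is full and `F.map f₁ = F.map f₂` for `f₁ f₂ : X ⟶ Y`. If `g : Y ⟶ Z` completes
`f₁ - f₂` to a distinguished triangle, then `F.map g` is a split mono. By fullness of `G`, a
retraction of it is the image of a left fraction `Z ⟶ Y' ⟵ Y : s` of the Verdier quotient, so
`F` sends the composite `t : Y ⟶ Z ⟶ Y'` to the isomorphism `F.map s`. Thus `t` is inverted in
the quotient while `f₁ ≫ t = f₂ ≫ t`, hence `q f₁ = q f₂`, and faithfulness of `G` follows by
the calculus of left fractions. -/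

/-- The class of morphisms of `T` admitting a cone killed by `F`.  Localizing at this
class is the Verdier quotient of `T` by the kernel of `F` (the full triangulated
subcategory of objects `X` with `F.obj X ≅ 0`). -/
def coneKilledByF {T : Type u₁} [Category.{v₁} T] [HasZeroObject T] [HasShift T ℤ]
    [Preadditive T] [∀ n : ℤ, (shiftFunctor T n).Additive] [Pretriangulated T]
    {T' : Type u₂} [Category.{v₂} T'] (F : T ⥤ T') [Limits.HasZeroMorphisms T'] :
    MorphismProperty T :=
  fun X Y f => ∃ (Z : T) (g : Y ⟶ Z) (h : Z ⟶ X⟦(1 : ℤ)⟧),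
    (Triangle.mk f g h ∈ distTriang T) ∧ IsZero (F.obj Z)

namespace CategoryTheory

lemma Localization.exists_leftFraction_map_eq_comp_map_s {C D E : Type*} [Category* C]
    [Category* D] [Category* E] (L : C ⥤ D) (W : MorphismProperty C) [L.IsLocalization W]
    [W.HasLeftCalculusOfFractions] {G : D ⥤ E} [G.Full] {F : C ⥤ E} (e : L ⋙ G ≅ F)
    {X Y : C} (φ : F.obj X ⟶ F.obj Y) :
    ∃ ψ : W.LeftFraction X Y, F.map ψ.f = φ ≫ F.map ψ.s := by
  obtain ⟨ρ, hρ⟩ := G.map_surjective (e.hom.app X ≫ φ ≫ e.inv.app Y)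
  obtain ⟨ψ, rfl⟩ := Localization.exists_leftFraction L W ρ
  refine ⟨ψ, ?_⟩
  have h := congrArg G.map (ψ.map_comp_map_s L (Localization.inverts L W))
  rw [G.map_comp, hρ] at h
  rw [← NatIso.naturality_1 e, ← NatIso.naturality_1 e, Functor.comp_map, Functor.comp_map, ← h]
  simp only [Functor.comp_obj, Category.assoc, Iso.inv_hom_id_app_assoc]

namespace Functor

variable {C D : Type*} [Category* C] [Category* D] [HasZeroObject C] [HasShift C ℤ]
  [Preadditive C] [∀ n : ℤ, (shiftFunctor C n).Additive] [Pretriangulated C]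
  [HasZeroObject D] [HasShift D ℤ] [Preadditive D] [∀ n : ℤ, (shiftFunctor D n).Additive]
  [Pretriangulated D] (F : C ⥤ D) [F.CommShift ℤ] [F.IsTriangulated]

lemma isZero_map_obj₃_iff {T : Triangle C} (hT : T ∈ distTriang C) :
    IsZero (F.obj T.obj₃) ↔ IsIso (F.map T.mor₁) :=
  (F.mapTriangle.obj T).isZero₃_iff_isIso₁ (F.map_distinguished T hT)

lemma isZero_map_obj₁_iff {T : Triangle C} (hT : T ∈ distTriang C) :
    IsZero (F.obj T.obj₁) ↔ IsIso (F.map T.mor₂) :=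
  (F.mapTriangle.obj T).isZero₁_iff_isIso₂ (F.map_distinguished T hT)

end Functor

end CategoryTheory

section

variable {T : Type u₁} [Category.{v₁} T] [HasZeroObject T] [HasShift T ℤ]
  [Preadditive T] [∀ n : ℤ, (shiftFunctor T n).Additive] [Pretriangulated T]
  {T' : Type u₂} [Category.{v₂} T'] [HasZeroObject T'] [HasShift T' ℤ]
  [Preadditive T'] [∀ n : ℤ, (shiftFunctor T' n).Additive] [Pretriangulated T']
  (F : T ⥤ T') [F.CommShift ℤ] [F.IsTriangulated]

lemma coneKilledByF_iff_isIso {X Y : T} (f : X ⟶ Y) :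
    coneKilledByF F f ↔ IsIso (F.map f) := by
  constructor
  · rintro ⟨Z, g, h, hT, hZ⟩
    exact (F.isZero_map_obj₃_iff hT).1 hZ
  · intro hf
    obtain ⟨Z, g, h, hT⟩ := distinguished_cocone_triangle f
    exact ⟨Z, g, h, hT, (F.isZero_map_obj₃_iff hT).2 hf⟩

lemma coneKilledByF_eq_inverseImage_isomorphisms :
    coneKilledByF F = (MorphismProperty.isomorphisms T').inverseImage F := by
  ext X Y f
  exact coneKilledByF_iff_isIso F f

-- As a preimage of the isomorphisms, the class is multiplicative without the octahedral axiom
-- (which Mathlib's instance for `ObjectProperty.trW` requires).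
instance : (coneKilledByF F).IsMultiplicative := by
  rw [coneKilledByF_eq_inverseImage_isomorphisms]
  infer_instance

instance : (coneKilledByF F).HasLeftCalculusOfFractions where
  exists_leftFraction X Y φ := by
    obtain ⟨Z, g, h, hT, hZ⟩ := φ.hs
    obtain ⟨Y', s, f, hT'⟩ := distinguished_cocone_triangle₂ (h ≫ φ.f⟦(1 : ℤ)⟧')
    obtain ⟨b, hb, -⟩ :=
      complete_distinguished_triangle_morphism₂ _ _ hT hT' φ.f (𝟙 Z) (Category.id_comp _).symm
    exact ⟨⟨b, s, ⟨Z, f, _, hT', hZ⟩⟩, hb.symm⟩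
  ext := by
    rintro X' X Y f₁ f₂ s ⟨Z, g, h, hT, hZ⟩ hs
    obtain ⟨u, hu⟩ : ∃ u : Z ⟶ Y, f₁ - f₂ = g ≫ u := Triangle.yoneda_exact₂ _ hT (f₁ - f₂)
      (show s ≫ (f₁ - f₂) = 0 by rw [Preadditive.comp_sub, hs, sub_self])
    obtain ⟨V, t, w, hT'⟩ := distinguished_cocone_triangle u
    refine ⟨V, t, (coneKilledByF_iff_isIso F t).2 ((F.isZero_map_obj₁_iff hT').1 hZ), ?_⟩
    rw [← sub_eq_zero, ← Preadditive.sub_comp, hu, Category.assoc,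
      show u ≫ t = 0 from comp_distTriang_mor_zero₁₂ _ hT', Limits.comp_zero]

variable {F}

lemma coneKilledByF_Q_map_eq_of_map_eq {G : (coneKilledByF F).Localization ⥤ T'} [G.Full]
    (e : (coneKilledByF F).Q ⋙ G ≅ F) {X Y : T} {f₁ f₂ : X ⟶ Y}
    (hf : F.map f₁ = F.map f₂) :
    (coneKilledByF F).Q.map f₁ = (coneKilledByF F).Q.map f₂ := by
  rw [MorphismProperty.map_eq_iff_postcomp (coneKilledByF F).Q (coneKilledByF F)]
  obtain ⟨Z, g, h, hT⟩ := distinguished_cocone_triangle (f₁ - f₂)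
  obtain ⟨r, hr⟩ : ∃ r : F.obj Z ⟶ F.obj Y, 𝟙 _ = F.map g ≫ r :=
    Triangle.yoneda_exact₂ _ (F.map_distinguished _ hT) (𝟙 _)
      (show F.map (f₁ - f₂) ≫ 𝟙 _ = 0 by rw [F.map_sub, hf, sub_self, Limits.zero_comp])
  obtain ⟨ψ, hψ⟩ := Localization.exists_leftFraction_map_eq_comp_map_s _ (coneKilledByF F) e r
  refine ⟨ψ.Y', g ≫ ψ.f, ?_, ?_⟩
  · have := (coneKilledByF_iff_isIso F ψ.s).1 ψ.hs
    rw [coneKilledByF_iff_isIso, F.map_comp, hψ, ← Category.assoc, ← hr, Category.id_comp]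
    infer_instance
  · rw [← sub_eq_zero, ← Preadditive.sub_comp, ← Category.assoc,
      show (f₁ - f₂) ≫ g = 0 from comp_distTriang_mor_zero₁₂ _ hT, Limits.zero_comp]

end

/-- Let `F : T ⥤ T'` be a triangulated functor, let `q : T ⥤ T/K` be the Verdier
quotient of `T` by the kernel `K` of `F` (realized as the localization of `T` at the
class of morphisms whose cone is killed by `F`), and let `G : T/K ⥤ T'` be a functor
together with a natural isomorphism `q ⋙ G ≅ F`.  If `G` is full then `G` is faithful;
in particular, if `F` is full and essentially surjective then `G` is an equivalence. -/
theorem verdier_quotient_full_implies_faithful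
    {T : Type u₁} [Category.{v₁} T] [HasZeroObject T] [HasShift T ℤ]
    [Preadditive T] [∀ n : ℤ, (shiftFunctor T n).Additive] [Pretriangulated T]
    {T' : Type u₂} [Category.{v₂} T'] [HasZeroObject T'] [HasShift T' ℤ]
    [Preadditive T'] [∀ n : ℤ, (shiftFunctor T' n).Additive] [Pretriangulated T']
    (F : T ⥤ T') [F.CommShift ℤ] [F.IsTriangulated]
    (G : (coneKilledByF F).Localization ⥤ T')
    (e : (coneKilledByF F).Q ⋙ G ≅ F) :
    (G.Full → G.Faithful) ∧ (F.Full → F.EssSurj → G.IsEquivalence) := by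
  let Q := (coneKilledByF F).Q
  have : Q.EssSurj := Localization.essSurj Q (coneKilledByF F)
  have faithful_of_full : G.Full → G.Faithful := fun _ ↦
    Functor.faithful_of_comp_of_hasLeftCalculusOfFractions Q (coneKilledByF F) G fun _ _ f₁ f₂ h ↦
      coneKilledByF_Q_map_eq_of_map_eq e (by
        rw [← NatIso.naturality_1 e f₁, ← NatIso.naturality_1 e f₂, Functor.comp_map,
          Functor.comp_map, h])
  refine ⟨faithful_of_full, fun _ _ ↦ ?_⟩
  have : (Q ⋙ G).Full := Functor.Full.of_iso e.symm
  have : (Q ⋙ G).EssSurj := Functor.essSurj_of_iso e.symm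
  have : G.Full := G.full_of_comp_essSurj Q fun _ _ φ ↦ ⟨Q.map _, (Q ⋙ G).map_preimage φ⟩
  have : G.EssSurj :=
    ⟨fun Y ↦ Functor.essImage_comp_apply_of_essSurj.1 (Functor.EssSurj.mem_essImage (Q ⋙ G) Y)⟩
  exact { faithful := faithful_of_full ‹_› }
end

section
/- Let O be a commutative Noetherian ring and let A be an O-algebra which is finitely generated as an O-module. Let φ : M → N be an injective homomorphism of finitely generated A-modules. Then there exist a finitely generated A-module K whose support over O is contained in the support of M over O (i.e., every prime ideal p of O with K_p ≠ 0 satisfies M_p ≠ 0), and an A-module homomorphism ψ : N → K, such that the composition ψ ∘ φ : M → K is injective. -/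
/-!
Choose a submodule `P ≤ N` maximal among those meeting `φ(M)` trivially and take `K = N ⧸ P`.
Maximality makes the image of `M` essential in `K`. If `r ∈ O` kills `M`, the kernels of the
powers of `r` on the Noetherian `O`-module `K` stabilise at some `r ^ n`; any `x` with
`r ^ n • x ≠ 0` would have a multiple `a • r ^ n • x ≠ 0` in the image of `M`, forcing
`a • x ∈ ker r ^ (n + 1) = ker r ^ n`, absurd. So `Ann_O M ⊆ √(Ann_O K)`, whence
`Supp_O K ⊆ V(Ann_O M) = Supp_O M`.
-/

theorem exists_maximal_disjoint {α : Type*} [CompleteLattice α] [IsCompactlyGenerated α]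
    (b : α) : ∃ a, Maximal (Disjoint · b) a :=
  zorn_le₀ {a | Disjoint a b} fun _ hc hchain =>
    ⟨_, hchain.directedOn.disjoint_sSup_left.2 hc, fun _ => le_sSup⟩

namespace Submodule

variable {A K : Type*} [Ring A] [AddCommGroup K] [Module A K]

def IsEssential (L : Submodule A K) : Prop :=
  ∀ U : Submodule A K, Disjoint U L → U = ⊥

theorem IsEssential.exists_smul_ne_zero_mem {L : Submodule A K} (hL : L.IsEssential)
    {x : K} (hx : x ≠ 0) : ∃ a : A, a • x ≠ 0 ∧ a • x ∈ L := by
  by_contra! h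
  refine hx (span_singleton_eq_bot.1 (hL _ (disjoint_def.2 fun y hyx hyL => ?_)))
  obtain ⟨a, rfl⟩ := mem_span_singleton.1 hyx
  by_contra hy
  exact h a hy hyL

theorem isEssential_map_mkQ_of_maximal_disjoint {N : Type*} [AddCommGroup N] [Module A N]
    {L P : Submodule A N} (hP : Maximal (Disjoint · L) P) : (L.map P.mkQ).IsEssential := by
  intro U hU
  have hPU : P ≤ U.comap P.mkQ := fun y hy => by
    simp [(Quotient.mk_eq_zero P).2 hy]
  have hdisj : Disjoint (U.comap P.mkQ) L := by
    refine disjoint_def.2 fun y hyU hyL => ?_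
    have hyP : y ∈ P := (Quotient.mk_eq_zero P).1 <|
      disjoint_def.1 hU _ hyU (mem_map_of_mem hyL)
    exact disjoint_def.1 hP.prop y hyP hyL
  rw [← map_comap_eq_of_surjective P.mkQ_surjective U,
    le_antisymm (hP.le_of_ge hdisj hPU) hPU, mkQ_map_self]

theorem injective_mkQ_comp_of_disjoint {M N : Type*} [AddCommGroup M] [Module A M]
    [AddCommGroup N] [Module A N] {φ : M →ₗ[A] N} (hφ : Function.Injective φ)
    {P : Submodule A N} (hP : Disjoint P (LinearMap.range φ)) :
    Function.Injective (P.mkQ ∘ₗ φ) := by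
  refine LinearMap.ker_eq_bot.1 (eq_bot_iff.2 fun m hm => ?_)
  have hφm : φ m ∈ P := (Quotient.mk_eq_zero P).1 hm
  exact hφ.eq_iff' (map_zero φ) |>.1 (disjoint_def.1 hP _ hφm ⟨m, rfl⟩)

end Submodule

section Support

variable {O A K : Type*} [CommRing O] [Ring A] [Algebra O A]
  [AddCommGroup K] [Module O K] [Module A K] [IsScalarTower O A K]

theorem Submodule.IsEssential.annihilator_le_radical [IsNoetherian O K] {L : Submodule A K}
    (hL : L.IsEssential) : Module.annihilator O L ≤ (Module.annihilator O K).radical := by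
  intro r hr
  set f : Module.End O K := algebraMap O (Module.End O K) r
  have hf : ∀ k (x : K), (f ^ k) x = r ^ k • x := fun k x => by
    rw [← map_pow, Module.algebraMap_end_apply]
  obtain ⟨n, hn⟩ := monotone_stabilizes_iff_noetherian.mpr inferInstance f.iterateKer
  refine ⟨n, Module.mem_annihilator.2 fun x => ?_⟩
  by_contra hx
  obtain ⟨a, ha, haL⟩ := hL.exists_smul_ne_zero_mem hx
  have hker : a • x ∈ f.iterateKer (n + 1) := by
    change (f ^ (n + 1)) (a • x) = 0
    rw [hf, pow_succ', mul_smul, smul_comm (r ^ n) a]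
    exact congrArg Subtype.val (Module.mem_annihilator.1 hr ⟨_, haL⟩)
  rw [← hn (n + 1) n.le_succ] at hker
  change (f ^ n) (a • x) = 0 at hker
  rw [hf, smul_comm] at hker
  exact ha hker

theorem Module.support_subset_of_annihilator_le_radical {M : Type*} [AddCommGroup M]
    [Module O M] [Module.Finite O M]
    (h : Module.annihilator O M ≤ (Module.annihilator O K).radical) :
    Module.support O K ⊆ Module.support O M := fun q hq => by
  rw [Module.support_eq_zeroLocus, PrimeSpectrum.mem_zeroLocus, SetLike.coe_subset_coe]
  exact h.trans (q.2.radical_le_iff.2 (Module.annihilator_le_of_mem_support hq))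

end Support

/-- Let `O` be a commutative Noetherian ring and `A` an `O`-algebra which is finitely
generated as an `O`-module.  Given an injective homomorphism `φ : M → N` of finitely
generated `A`-modules, there exist a finitely generated `A`-module `K` whose support
over `O` is contained in the support of `M` over `O`, and an `A`-linear map `ψ : N → K`
such that `ψ ∘ φ` is injective. -/
theorem exists_injective_compression
    (O : Type) [CommRing O] [IsNoetherianRing O]
    (A : Type) [Ring A] [Algebra O A] [Module.Finite O A]
    (M : Type) [AddCommGroup M] [Module O M] [Module A M] [IsScalarTower O A M]
    [Module.Finite A M]
    (N : Type) [AddCommGroup N] [Module O N] [Module A N] [IsScalarTower O A N]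
    [Module.Finite A N]
    (φ : M →ₗ[A] N) (hφ : Function.Injective φ) :
    ∃ (K : Type) (_ : AddCommGroup K) (_ : Module O K) (_ : Module A K)
      (_ : IsScalarTower O A K),
      Module.Finite A K ∧ Module.support O K ⊆ Module.support O M ∧
      ∃ ψ : N →ₗ[A] K, Function.Injective (ψ ∘ₗ φ) := by
  obtain ⟨P, hP⟩ := exists_maximal_disjoint (LinearMap.range φ)
  have : Module.Finite O M := .trans A M
  have : Module.Finite O (N ⧸ P) := .trans A (N ⧸ P)
  have hess := Submodule.isEssential_map_mkQ_of_maximal_disjoint hP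
  have hann : Module.annihilator O M ≤ Module.annihilator O ((LinearMap.range φ).map P.mkQ) := by
    rw [← LinearMap.range_comp]
    exact LinearMap.annihilator_le_of_surjective (((P.mkQ ∘ₗ φ).rangeRestrict).restrictScalars O)
      (P.mkQ ∘ₗ φ).surjective_rangeRestrict
  refine ⟨N ⧸ P, inferInstance, inferInstance, inferInstance, inferInstance, inferInstance,
    Module.support_subset_of_annihilator_le_radical (hann.trans hess.annihilator_le_radical),
    P.mkQ, Submodule.injective_mkQ_comp_of_disjoint hφ hP.prop⟩
end

section
/- Let O be a commutative ring, let F be a finitely generated O-module admitting O as a direct summand, and let A = End_O(F) be its endomorphism ring, so that F is a left A-module via evaluation and the A-action commutes with the O-action. Then the functor F ⊗_O − from the homotopy category of bounded complexes of finitely generated projective O-modules to the derived category of left A-modules is fully faithful: for all bounded complexes P• and Q• of finitely generated projective O-modules, it induces a bijection from the group of homotopy classes of chain maps P• → Q• to Hom_{D(A)}(F ⊗_O P•, F ⊗_O Q•). -/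
open CategoryTheory Limits TensorProduct

noncomputable instance stmt13HasDerivedCategory (A : Type) [Ring A] :
    HasDerivedCategory (ModuleCat.{0} A) :=
  HasDerivedCategory.standard _

/-- The functor `F ⊗_O -` from `O`-modules to modules over `A = End_O(F)`, where `A` acts
on the first tensor factor by evaluation. -/
noncomputable def tensorFunctor (O : Type) [CommRing O] (F : Type) [AddCommGroup F]
    [Module O F] : ModuleCat.{0} O ⥤ ModuleCat.{0} (Module.End O F) where
  obj M := ModuleCat.of (Module.End O F) (F ⊗[O] M)
  map {M N} f :=
    ModuleCat.ofHom
    { toFun := LinearMap.lTensor F f.hom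
      map_add' := fun x y => map_add _ x y
      map_smul' := fun a x => by
        have key : ∀ y : F ⊗[O] M,
            (LinearMap.lTensor F f.hom) (a • y) = a • (LinearMap.lTensor F f.hom) y := by
          intro y
          induction y using TensorProduct.induction_on with
          | zero => simp
          | tmul m n =>
            rw [TensorProduct.smul_tmul', LinearMap.lTensor_tmul,
              LinearMap.lTensor_tmul, TensorProduct.smul_tmul']
          | add u v hu hv => rw [smul_add, map_add, hu, hv, map_add, smul_add]
        exact key x }
  map_id M := by
    apply ModuleCat.hom_ext
    apply LinearMap.ext
    intro x
    show LinearMap.lTensor F (LinearMap.id) x = x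
    rw [LinearMap.lTensor_id]
    rfl
  map_comp {M N P} f g := by
    apply ModuleCat.hom_ext
    apply LinearMap.ext
    intro x
    show LinearMap.lTensor F (g.hom ∘ₗ f.hom) x = _
    rw [LinearMap.lTensor_comp]
    rfl

instance tensorFunctor_additive (O : Type) [CommRing O] (F : Type) [AddCommGroup F]
    [Module O F] : (tensorFunctor O F).Additive where
  map_add := by
    intro M N f g
    apply ModuleCat.hom_ext
    apply LinearMap.ext
    intro x
    show LinearMap.lTensor F (f.hom + g.hom) x = _
    rw [LinearMap.lTensor_add]
    rfl

/-!
If `p e = 1`, then `N` is a natural retract of `F ⊗ N` via `n ↦ e ⊗ n` and `x ⊗ n ↦ p x • n`, and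
the rank-one endomorphisms `y ↦ p y • x` of `F` show that an `End F`-linear map `F ⊗ M → F ⊗ N` is
determined by its values on `e ⊗ M`. Hence `F ⊗ -` is fully faithful on modules, and therefore on
chain maps and homotopies. The same endomorphisms split `a ↦ a e`, so `F`, and with it `F ⊗ P` for
`P` projective, is projective over `End F`. Thus `F ⊗ P•` is a bounded above complex of projectives,
hence K-projective, and morphisms out of it in the derived category are homotopy classes of chain
maps.
-/

section SplitGenerator

variable {O : Type*} [CommRing O] {F : Type*} [AddCommGroup F] [Module O F]

def contraction (p : F →ₗ[O] O) (N : Type*) [AddCommGroup N] [Module O N] :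
    F ⊗[O] N →ₗ[O] N :=
  TensorProduct.lid O N ∘ₗ p.rTensor N

variable {M N : Type*} [AddCommGroup M] [Module O M] [AddCommGroup N] [Module O N]

@[simp]
lemma contraction_tmul (p : F →ₗ[O] O) (x : F) (n : N) :
    contraction p N (x ⊗ₜ n) = p x • n := by
  simp [contraction]

variable {e : F} {p : F →ₗ[O] O}

lemma contraction_comp_lTensor_comp_mk (he : p e = 1) (φ : M →ₗ[O] N) :
    contraction p N ∘ₗ φ.lTensor F ∘ₗ TensorProduct.mk O F M e = φ := by
  ext m
  simp [he]

lemma lTensor_injective_of_apply_eq_one (he : p e = 1) :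
    Function.Injective (LinearMap.lTensor F : (M →ₗ[O] N) → _) := by
  intro φ ψ h
  rw [← contraction_comp_lTensor_comp_mk he φ, ← contraction_comp_lTensor_comp_mk he ψ, h]

lemma smulRight_smul_eq_tmul_contraction (x : F) (t : F ⊗[O] N) :
    p.smulRight x • t = x ⊗ₜ contraction p N t := by
  induction t using TensorProduct.induction_on with
  | zero => simp
  | tmul y n =>
    change (p y • x) ⊗ₜ n = _
    simp [TensorProduct.smul_tmul]
  | add u v hu hv => simp [hu, hv, TensorProduct.tmul_add]

/-- `ψ` commutes with the rank-one endomorphisms `y ↦ p y • x`, which carry `e ⊗ m` to `x ⊗ m`. -/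
lemma lTensor_contraction_comp_mk (he : p e = 1)
    (ψ : F ⊗[O] M →ₗ[Module.End O F] F ⊗[O] N) :
    (contraction p N ∘ₗ ψ.restrictScalars O ∘ₗ TensorProduct.mk O F M e).lTensor F =
      ψ.restrictScalars O := by
  ext x m
  have hx : p.smulRight x • (e ⊗ₜ[O] m) = x ⊗ₜ m := by
    simp [smulRight_smul_eq_tmul_contraction, he]
  calc x ⊗ₜ contraction p N (ψ (e ⊗ₜ m))
      = p.smulRight x • ψ (e ⊗ₜ m) := (smulRight_smul_eq_tmul_contraction x _).symm
    _ = ψ (x ⊗ₜ m) := by rw [← map_smul, hx]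

lemma Module.projective_end_of_apply_eq_one (he : p e = 1) :
    Module.Projective (Module.End O F) F :=
  Module.Projective.of_split
    { toFun := p.smulRight
      map_add' := fun x y => by ext; simp
      map_smul' := fun a x => by ext; simp [Module.End.mul_apply] }
    (LinearMap.toSpanSingleton _ F e) (by ext x; simp [he])

end SplitGenerator

section tensorFunctor

variable {O : Type} [CommRing O] {F : Type} [AddCommGroup F] [Module O F] {e : F} {p : F →ₗ[O] O}

lemma tensorFunctor_faithful (he : p e = 1) : (tensorFunctor O F).Faithful where
  map_injective h := ModuleCat.hom_ext <| lTensor_injective_of_apply_eq_one he <|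
    LinearMap.ext fun t => congr(ModuleCat.Hom.hom $h t)

lemma tensorFunctor_full (he : p e = 1) : (tensorFunctor O F).Full where
  map_surjective {M N} ψ := by
    let ψ' : F ⊗[O] M →ₗ[Module.End O F] F ⊗[O] N := ψ.hom
    exact ⟨ModuleCat.ofHom (contraction p N ∘ₗ ψ'.restrictScalars O ∘ₗ TensorProduct.mk O F M e),
      ModuleCat.hom_ext <| LinearMap.ext fun t => congr($(lTensor_contraction_comp_mk he ψ') t)⟩

lemma tensorFunctor_preservesProjectiveObjects (he : p e = 1) :
    (tensorFunctor O F).PreservesProjectiveObjects where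
  projective_obj {M} _ := by
    have := Module.projective_end_of_apply_eq_one he
    change Projective (ModuleCat.of _ (F ⊗[O] M))
    infer_instance

end tensorFunctor

namespace CategoryTheory.Functor

variable {C D : Type*} [Category C] [Abelian C] [Category D] [Abelian D] (G : C ⥤ D)
  [G.Additive] [G.PreservesProjectiveObjects]

lemma isKProjective_mapHomologicalComplex_obj (K : CochainComplex C ℤ) (d : ℤ)
    [K.IsStrictlyLE d] [∀ n, Projective (K.X n)] :
    CochainComplex.IsKProjective ((G.mapHomologicalComplex (.up ℤ)).obj K) := by
  have : CochainComplex.IsStrictlyLE ((G.mapHomologicalComplex (.up ℤ)).obj K) d := by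
    rw [CochainComplex.isStrictlyLE_iff]
    exact fun i hi => G.map_isZero (K.isZero_of_isStrictlyLE d i hi)
  have (n : ℤ) : Projective (((G.mapHomologicalComplex (.up ℤ)).obj K).X n) :=
    G.projective_obj (K.X n)
  exact CochainComplex.isKProjective_of_projective _ d

end CategoryTheory.Functor

namespace DerivedCategory

variable {C : Type*} [Category C] [Abelian C] [HasDerivedCategory C]
  {K L : CochainComplex C ℤ} [K.IsKProjective]

lemma Q_map_eq_iff_of_isKProjective (f g : K ⟶ L) :
    Q.map f = Q.map g ↔ Nonempty (Homotopy f g) := by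
  refine ⟨fun h => ⟨HomotopyCategory.homotopyOfEq _ _ ?_⟩, fun ⟨H⟩ => Q_map_eq_of_homotopy _ H⟩
  apply (CochainComplex.IsKProjective.Qh_map_bijective K _).injective
  rw [← cancel_mono ((quotientCompQhIso C).hom.app L)]
  simp only [quotientCompQhIso_hom_naturality, h]

lemma Q_map_surjective_of_isKProjective :
    Function.Surjective (Q.map : (K ⟶ L) → (Q.obj K ⟶ Q.obj L)) := by
  intro θ
  obtain ⟨g, hg⟩ := (CochainComplex.IsKProjective.Qh_map_bijective K
    ((HomotopyCategory.quotient _ _).obj L)).surjective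
      ((quotientCompQhIso C).hom.app K ≫ θ ≫ (quotientCompQhIso C).inv.app L)
  obtain ⟨f, rfl⟩ := (HomotopyCategory.quotient _ _).map_surjective g
  refine ⟨f, ?_⟩
  rw [← cancel_epi ((quotientCompQhIso C).hom.app K), ← quotientCompQhIso_hom_naturality, hg]
  simp

end DerivedCategory

theorem tensor_fullyFaithful_on_homotopyCategory_general
    (O : Type) [CommRing O] (F : Type) [AddCommGroup F] [Module O F]
    (hsplit : ∃ (ι : O →ₗ[O] F) (p : F →ₗ[O] O), p ∘ₗ ι = LinearMap.id)
    (P Q : CochainComplex (ModuleCat.{0} O) ℤ)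
    (hP : (∀ n, Module.Projective O (P.X n) ∧ Module.Finite O (P.X n)) ∧
      ∃ a b : ℤ, ∀ n, (n < a ∨ b < n) → IsZero (P.X n)) :
    (∀ φ₁ φ₂ : P ⟶ Q,
      DerivedCategory.Q.map
          (((tensorFunctor O F).mapHomologicalComplex (ComplexShape.up ℤ)).map φ₁) =
        DerivedCategory.Q.map
          (((tensorFunctor O F).mapHomologicalComplex (ComplexShape.up ℤ)).map φ₂) ↔
      Nonempty (Homotopy φ₁ φ₂)) ∧
    Function.Surjective (fun φ : P ⟶ Q =>
      DerivedCategory.Q.map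
        (((tensorFunctor O F).mapHomologicalComplex (ComplexShape.up ℤ)).map φ)) := by
  obtain ⟨ι, p, hp⟩ := hsplit
  obtain ⟨hPproj, _, b, hPb⟩ := hP
  have he : p (ι 1) = 1 := LinearMap.congr_fun hp 1
  have := tensorFunctor_full he
  have := tensorFunctor_faithful he
  have := tensorFunctor_preservesProjectiveObjects he
  have : P.IsStrictlyLE b := (P.isStrictlyLE_iff b).2 fun n hn => hPb n (.inr hn)
  have (n : ℤ) : Projective (P.X n) := by have := (hPproj n).1; infer_instance
  have := (tensorFunctor O F).isKProjective_mapHomologicalComplex_obj P b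
  refine ⟨fun φ₁ φ₂ => ?_, fun θ => ?_⟩
  · rw [DerivedCategory.Q_map_eq_iff_of_isKProjective]
    exact ⟨fun ⟨H⟩ => ⟨(tensorFunctor O F).preimageHomotopy H⟩,
      fun ⟨H⟩ => ⟨(tensorFunctor O F).mapHomotopy H⟩⟩
  · obtain ⟨ψ, rfl⟩ := DerivedCategory.Q_map_surjective_of_isKProjective θ
    obtain ⟨φ, rfl⟩ := ((tensorFunctor O F).mapHomologicalComplex _).map_surjective ψ
    exact ⟨φ, rfl⟩

/-- Let `O` be a commutative ring and `F` a finitely generated `O`-module admitting `O`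
as a direct summand, with endomorphism ring `A = End_O(F)`.  Then `F ⊗_O -` is fully
faithful from the homotopy category of bounded complexes of finitely generated projective
`O`-modules to the derived category of `A`-modules: for bounded complexes `P`, `Q` of
finitely generated projective `O`-modules, two chain maps `P ⟶ Q` have the same image in
`D(A)` iff they are homotopic, and every morphism `F ⊗ P ⟶ F ⊗ Q` in `D(A)` arises from
a chain map. -/
theorem tensor_fullyFaithful_on_homotopyCategory
    (O : Type) [CommRing O] (F : Type) [AddCommGroup F] [Module O F] [Module.Finite O F]
    (hsplit : ∃ (ι : O →ₗ[O] F) (p : F →ₗ[O] O), p ∘ₗ ι = LinearMap.id)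
    (P Q : CochainComplex (ModuleCat.{0} O) ℤ)
    (hP : (∀ n, Module.Projective O (P.X n) ∧ Module.Finite O (P.X n)) ∧
      ∃ a b : ℤ, ∀ n, (n < a ∨ b < n) → IsZero (P.X n))
    (hQ : (∀ n, Module.Projective O (Q.X n) ∧ Module.Finite O (Q.X n)) ∧
      ∃ a b : ℤ, ∀ n, (n < a ∨ b < n) → IsZero (Q.X n)) :
    (∀ φ₁ φ₂ : P ⟶ Q,
      DerivedCategory.Q.map
          (((tensorFunctor O F).mapHomologicalComplex (ComplexShape.up ℤ)).map φ₁) =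
        DerivedCategory.Q.map
          (((tensorFunctor O F).mapHomologicalComplex (ComplexShape.up ℤ)).map φ₂) ↔
      Nonempty (Homotopy φ₁ φ₂)) ∧
    Function.Surjective (fun φ : P ⟶ Q =>
      DerivedCategory.Q.map
        (((tensorFunctor O F).mapHomologicalComplex (ComplexShape.up ℤ)).map φ)) :=
  tensor_fullyFaithful_on_homotopyCategory_general O F hsplit P Q hP
end
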